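/- For all strings S, T and every character c, the delete–insert edit distance satisfies d_DI(S ++ [c], T ++ [c]) = d_DI(S, T). -/

import Mathlib

/-!
The distance is governed by longest common subsequences: `dDI S T + 2 * lcss S T = |S| + |T|`.
Deleting `S` down to a longest common subsequence and inserting back up to `T` gives `≤`;
for `≥`, the potential `|M| - 2 * lcss M T` drops by at most one per deletion or insertion
and goes from `|S| - 2 * lcss S T` to `-|T|`. Appending `c` to both strings adds one to each
length and to `lcss`, so the distance is unchanged.
-/

/-- `StepsIn R k S T` holds if there is a sequence of exactly `k` steps of the
relation `R` transforming `S` into `T`. -/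
def StepsIn {α : Type*} (R : List α → List α → Prop) : ℕ → List α → List α → Prop
  | 0, S, T => S = T
  | n + 1, S, T => ∃ M, R S M ∧ StepsIn R n M T

/-- A single delete or insert operation on a string. -/
inductive DIStep {α : Type*} : List α → List α → Prop
  | del (U V : List α) (c : α) : DIStep (U ++ [c] ++ V) (U ++ V)
  | ins (U V : List α) (c : α) : DIStep (U ++ V) (U ++ [c] ++ V)

/-- The delete–insert edit distance: the minimum number of single-character
deletions and insertions transforming `S` into `T`. -/
noncomputable def dDI {α : Type*} (S T : List α) : ℕ :=
  sInf {n | StepsIn DIStep n S T}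

/-- The length of a longest common subsequence of `S` and `T`. -/
noncomputable def lcss {α : Type*} (S T : List α) : ℕ :=
  sSup {n | ∃ L : List α, L.Sublist S ∧ L.Sublist T ∧ L.length = n}

namespace StepsIn

variable {α : Type*} {R : List α → List α → Prop}

theorem single {S T : List α} (h : R S T) : StepsIn R 1 S T := ⟨T, h, rfl⟩

theorem trans : ∀ {m n : ℕ} {S M T : List α},
    StepsIn R m S M → StepsIn R n M T → StepsIn R (m + n) S T
  | 0, _, _, _, _, rfl, h => by simpa using h
  | m + 1, n, _, _, _, ⟨N, hSN, hNM⟩, h => by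
    rw [Nat.add_right_comm]
    exact ⟨N, hSN, trans hNM h⟩

theorem map {f : List α → List α} (hf : ∀ S T, R S T → R (f S) (f T)) :
    ∀ {n : ℕ} {S T : List α}, StepsIn R n S T → StepsIn R n (f S) (f T)
  | 0, _, _, rfl => rfl
  | _ + 1, _, _, ⟨M, hSM, hMT⟩ => ⟨f M, hf _ _ hSM, map hf hMT⟩

theorem symm (hR : ∀ S T, R S T → R T S) :
    ∀ {n : ℕ} {S T : List α}, StepsIn R n S T → StepsIn R n T S
  | 0, _, _, rfl => rfl
  | _ + 1, _, _, ⟨_, hSM, hMT⟩ => (symm hR hMT).trans (single (hR _ _ hSM))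

theorem le_add_of_le_add_one {Φ : List α → ℤ} (hΦ : ∀ M N, R M N → Φ M ≤ Φ N + 1) :
    ∀ {n : ℕ} {S T : List α}, StepsIn R n S T → Φ S ≤ Φ T + n
  | 0, _, _, rfl => by simp
  | n + 1, _, _, ⟨_, hSM, hMT⟩ => by
    have := le_add_of_le_add_one hΦ hMT
    have := hΦ _ _ hSM
    push_cast
    omega

end StepsIn

namespace DIStep

variable {α : Type*}

theorem symm {S T : List α} : DIStep S T → DIStep T S
  | del U V c => ins U V c
  | ins U V c => del U V c

theorem cons (a : α) {S T : List α} : DIStep S T → DIStep (a :: S) (a :: T)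
  | del U V c => del (a :: U) V c
  | ins U V c => ins (a :: U) V c

end DIStep

open List

section Distance

variable {α : Type*}

theorem stepsIn_of_sublist {L S : List α} (h : L <+ S) :
    StepsIn DIStep (S.length - L.length) S L := by
  induction h with
  | slnil => rfl
  | @cons L S a h ih =>
    have hdel : DIStep (a :: S) S := by simpa using DIStep.del [] S a
    rw [length_cons, Nat.sub_add_comm h.length_le, Nat.add_comm]
    exact (StepsIn.single hdel).trans ih
  | cons_cons a _ ih =>
    simpa using ih.map fun _ _ => DIStep.cons a

theorem dropLast_sublist_of_sublist_append_singleton {L S : List α} {c : α}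
    (h : L <+ S ++ [c]) : L.dropLast <+ S := by
  obtain ⟨L₁, L₂, rfl, h₁, h₂⟩ := sublist_append_iff.1 h
  rcases sublist_singleton.1 h₂ with rfl | rfl
  · simpa using (dropLast_sublist L₁).trans h₁
  · simpa using h₁

theorem exists_sublist_append_of_sublist_append_cons {L U V : List α} {c : α}
    (h : L <+ U ++ c :: V) : ∃ L', L' <+ U ++ V ∧ L' <+ L ∧ L.length ≤ L'.length + 1 := by
  obtain ⟨L₁, L₂, rfl, h₁, h₂⟩ := sublist_append_iff.1 h
  cases h₂ with
  | cons _ h₂ => exact ⟨L₁ ++ L₂, h₁.append h₂, Sublist.refl _, by omega⟩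
  | @cons_cons L₂ _ _ h₂ =>
    refine ⟨L₁ ++ L₂, h₁.append h₂,
      (Sublist.refl L₁).append (sublist_cons_self c L₂), ?_⟩
    simp only [length_append, length_cons]
    omega

theorem bddAbove_lcss_set (S T : List α) :
    BddAbove {n | ∃ L : List α, L <+ S ∧ L <+ T ∧ L.length = n} :=
  ⟨S.length, by rintro _ ⟨L, hS, -, rfl⟩; exact hS.length_le⟩

theorem exists_sublist_length_eq_lcss (S T : List α) :
    ∃ L : List α, L <+ S ∧ L <+ T ∧ L.length = lcss S T :=
  Nat.sSup_mem (s := {n | ∃ L : List α, L <+ S ∧ L <+ T ∧ L.length = n})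
    ⟨0, [], nil_sublist _, nil_sublist _, rfl⟩ (bddAbove_lcss_set S T)

theorem length_le_lcss {L S T : List α} (hS : L <+ S) (hT : L <+ T) : L.length ≤ lcss S T :=
  le_csSup (bddAbove_lcss_set S T) ⟨L, hS, hT, rfl⟩

theorem lcss_self (T : List α) : lcss T T = T.length := by
  obtain ⟨L, hL, -, hlen⟩ := exists_sublist_length_eq_lcss T T
  exact le_antisymm (hlen ▸ hL.length_le) (length_le_lcss (Sublist.refl T) (Sublist.refl T))

theorem lcss_mono_left {S S' T : List α} (h : S <+ S') : lcss S T ≤ lcss S' T := by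
  obtain ⟨L, hS, hT, hlen⟩ := exists_sublist_length_eq_lcss S T
  exact hlen ▸ length_le_lcss (hS.trans h) hT

theorem lcss_append_cons_le (U V T : List α) (c : α) :
    lcss (U ++ c :: V) T ≤ lcss (U ++ V) T + 1 := by
  obtain ⟨L, hS, hT, hlen⟩ := exists_sublist_length_eq_lcss (U ++ c :: V) T
  obtain ⟨L', hL'S, hL'L, hlen'⟩ := exists_sublist_append_of_sublist_append_cons hS
  have := length_le_lcss hL'S (hL'L.trans hT)
  omega

theorem lcss_append_singleton (S T : List α) (c : α) :
    lcss (S ++ [c]) (T ++ [c]) = lcss S T + 1 := by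
  apply le_antisymm
  · obtain ⟨L, hS, hT, hlen⟩ := exists_sublist_length_eq_lcss (S ++ [c]) (T ++ [c])
    have := length_le_lcss (dropLast_sublist_of_sublist_append_singleton hS)
      (dropLast_sublist_of_sublist_append_singleton hT)
    rw [length_dropLast] at this
    omega
  · obtain ⟨L, hS, hT, hlen⟩ := exists_sublist_length_eq_lcss S T
    simpa [hlen] using length_le_lcss (L := L ++ [c]) (by simpa) (by simpa)

theorem DIStep.length_sub_two_mul_lcss_le {M N T : List α} (h : DIStep M N) :
    (M.length : ℤ) - 2 * lcss M T ≤ N.length - 2 * lcss N T + 1 := by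
  cases h with
  | del U V c =>
    have := lcss_mono_left (T := T) ((Sublist.refl U).append (sublist_cons_self c V))
    simp only [append_assoc, singleton_append, length_append, length_cons] at this ⊢
    omega
  | ins U V c =>
    have := lcss_append_cons_le U V T c
    simp only [append_assoc, singleton_append, length_append, length_cons] at this ⊢
    omega

theorem dDI_add_two_mul_lcss (S T : List α) : dDI S T + 2 * lcss S T = S.length + T.length := by
  obtain ⟨L, hS, hT, hlen⟩ := exists_sublist_length_eq_lcss S T
  have hpath : StepsIn DIStep (S.length - L.length + (T.length - L.length)) S T :=
    (stepsIn_of_sublist hS).trans ((stepsIn_of_sublist hT).symm fun _ _ => DIStep.symm)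
  have hle : dDI S T ≤ S.length - L.length + (T.length - L.length) := Nat.sInf_le hpath
  have hmin : StepsIn DIStep (dDI S T) S T :=
    Nat.sInf_mem (s := {n | StepsIn DIStep n S T}) ⟨_, hpath⟩
  have hge :=
    StepsIn.le_add_of_le_add_one (fun _ _ h => h.length_sub_two_mul_lcss_le (T := T)) hmin
  rw [lcss_self] at hge
  have := hS.length_le
  have := hT.length_le
  omega

end Distance

theorem dDI_append_same_general {α : Type*} (S T : List α) (c : α) :
    dDI (S ++ [c]) (T ++ [c]) = dDI S T := by
  have h := dDI_add_two_mul_lcss (S ++ [c]) (T ++ [c])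
  rw [lcss_append_singleton, length_append, length_append, length_singleton] at h
  have := dDI_add_two_mul_lcss S T
  omega

theorem dDI_append_same {α : Type*} [DecidableEq α] (S T : List α) (c : α) :
    dDI (S ++ [c]) (T ++ [c]) = dDI S T :=
  dDI_append_same_general S T c
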